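/- Let d ≥ 1, T > 0, ε > 0, γ > 1, η ≥ 0. Let ρ, θ : (0,T) × ℝ^d → ℝ be positive C¹ functions and u : (0,T) × ℝ^d → ℝ^d a C¹ vector field, all ℤ^d-periodic in the space variable, with p = (ρθ)^γ of class C², satisfying pointwise the mass equation ∂_t ρ + div(ρu) = 0, the momentum equations ∂_t(ρ u_i) + div(ρ u_i u) + ε^{−2} ∂_{x_i} p = 0 for each i, and the shifted total potential temperature equation ∂_t(ρθ) + div(ρθ(u − δu)) = 0 with velocity shift δu := η ∇p. Then the total energy E(t) := ∫_{[0,1]^d} (½ ρ(t,x) |u(t,x)|² + ε^{−2} Π_γ(ρ(t,x) θ(t,x))) dx is non-increasing in t on (0,T). -/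

import Mathlib

open Set MeasureTheory

/-- Time partial derivative `∂ₜ f` of a function of `(t, x) ∈ ℝ × ℝ^d`. -/
noncomputable def pderivT {d : ℕ} (f : ℝ × (Fin d → ℝ) → ℝ) (z : ℝ × (Fin d → ℝ)) : ℝ :=
  fderiv ℝ f z (1, 0)

/-- Spatial partial derivative `∂_{x i} f` of a function of `(t, x) ∈ ℝ × ℝ^d`. -/
noncomputable def pderivX {d : ℕ} (i : Fin d) (f : ℝ × (Fin d → ℝ) → ℝ)
    (z : ℝ × (Fin d → ℝ)) : ℝ :=
  fderiv ℝ f z (0, Pi.single i 1)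

/-- Spatial divergence of a (time-dependent) vector field on `ℝ^d`. -/
noncomputable def diverg {d : ℕ} (w : ℝ × (Fin d → ℝ) → Fin d → ℝ)
    (z : ℝ × (Fin d → ℝ)) : ℝ :=
  ∑ i, pderivX i (fun y => w y i) z

/-- The Helmholtz function `ψ_γ(z) = z^γ / (γ - 1)`. -/
noncomputable def psiH (γ : ℝ) (z : ℝ) : ℝ := z ^ γ / (γ - 1)

/-- The derivative `ψ_γ'(z) = γ z^(γ-1) / (γ - 1)` of the Helmholtz function. -/
noncomputable def psiH' (γ : ℝ) (z : ℝ) : ℝ := γ * z ^ (γ - 1) / (γ - 1)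

/-- The relative internal energy `Π_γ(z) = ψ_γ(z) - ψ_γ(1) - ψ_γ'(1) (z - 1)`. -/
noncomputable def PiH (γ : ℝ) (z : ℝ) : ℝ := psiH γ z - psiH γ 1 - psiH' γ 1 * (z - 1)

/-!
The energy density `e = ½ρ|u|² + ε⁻² Π_γ(ρθ)` satisfies the local balance
`∂ₜe + div W = -η ε⁻² |∇p|²` with flux `W = ½ρ|u|² u + ε⁻² (Π_γ(ρθ) + p - 1)(u - η∇p)`.
Mass and momentum conservation give `ρ (∂ₜ + u·∇) u = -ε⁻² ∇p`, hence the kinetic part of the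
balance; the transport equation for `q = ρθ` along the shifted velocity, together with
`Π_γ(q) - q Π_γ'(q) = 1 - p`, gives the internal part. The pressure work `u·∇p` cancels between
the two and only `-η ε⁻² |∇p|²` remains. By periodicity `∫ div W = 0` over the unit cube, so
integrating the balance in space and then in time shows that the total energy cannot increase.
-/

section Calculus

variable {d : ℕ} {z : ℝ × (Fin d → ℝ)}

lemma fderiv_apply_zero_prod (f : ℝ × (Fin d → ℝ) → ℝ) (v : Fin d → ℝ) :
    fderiv ℝ f z (0, v) = ∑ i, v i * pderivX i f z := by
  have hv : ((0 : ℝ), v) = ∑ i, v i • ((0 : ℝ), (Pi.single i 1 : Fin d → ℝ)) := by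
    ext j
    · simp [Prod.fst_sum]
    · simp [Prod.snd_sum, Finset.sum_apply, Pi.single_apply]
  simp only [hv, map_sum, map_smul, smul_eq_mul, pderivX]

lemma diverg_mul {a : ℝ × (Fin d → ℝ) → ℝ} {w : ℝ × (Fin d → ℝ) → Fin d → ℝ}
    (ha : DifferentiableAt ℝ a z) (hw : ∀ i, DifferentiableAt ℝ (fun y => w y i) z) :
    diverg (fun y i => a y * w y i) z = fderiv ℝ a z (0, w z) + a z * diverg w z := by
  rw [fderiv_apply_zero_prod]
  simp only [diverg, pderivX, fderiv_fun_mul ha (hw _), add_apply, smul_apply, smul_eq_mul,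
    Finset.sum_add_distrib, Finset.mul_sum]
  ring

lemma pderivT_add_diverg_mul {a : ℝ × (Fin d → ℝ) → ℝ} {w : ℝ × (Fin d → ℝ) → Fin d → ℝ}
    (ha : DifferentiableAt ℝ a z) (hw : ∀ i, DifferentiableAt ℝ (fun y => w y i) z) :
    pderivT a z + diverg (fun y i => a y * w y i) z
      = fderiv ℝ a z (1, w z) + a z * diverg w z := by
  rw [diverg_mul ha hw, show ((1 : ℝ), w z) = (1, 0) + (0, w z) by simp, map_add, pderivT]
  ring

lemma diverg_add {v w : ℝ × (Fin d → ℝ) → Fin d → ℝ}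
    (hv : ∀ i, DifferentiableAt ℝ (fun y => v y i) z)
    (hw : ∀ i, DifferentiableAt ℝ (fun y => w y i) z) :
    diverg (fun y i => v y i + w y i) z = diverg v z + diverg w z := by
  simp only [diverg, pderivX, fderiv_fun_add (hv _) (hw _), add_apply, Finset.sum_add_distrib]

lemma diverg_const_mul {w : ℝ × (Fin d → ℝ) → Fin d → ℝ}
    (hw : ∀ i, DifferentiableAt ℝ (fun y => w y i) z) (c : ℝ) :
    diverg (fun y i => c * w y i) z = c * diverg w z := by
  simp only [diverg, pderivX, fderiv_const_mul (hw _), smul_apply, smul_eq_mul, Finset.mul_sum]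

end Calculus

section InternalEnergy

variable {γ q : ℝ}

lemma hasDerivAt_PiH (hq : 0 < q) : HasDerivAt (PiH γ) (psiH' γ q - psiH' γ 1) q := by
  have hψ : HasDerivAt (psiH γ) (psiH' γ q) q :=
    (Real.hasDerivAt_rpow_const (Or.inl hq.ne')).div_const (γ - 1)
  have hlin : HasDerivAt (fun s => psiH' γ 1 * (s - 1)) (psiH' γ 1) q := by
    simpa using ((hasDerivAt_id q).sub_const 1).const_mul (psiH' γ 1)
  exact (hψ.sub_const (psiH γ 1)).fun_sub hlin

lemma PiH_sub_mul_deriv (hγ : γ ≠ 1) (hq : 0 < q) :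
    PiH γ q - q * (psiH' γ q - psiH' γ 1) = 1 - q ^ γ := by
  have hγ' : γ - 1 ≠ 0 := sub_ne_zero.2 hγ
  have hpow : q * q ^ (γ - 1) = q ^ γ := by
    rw [Real.rpow_sub_one hq.ne']; field_simp
  simp only [PiH, psiH, psiH', Real.one_rpow]
  field_simp
  linear_combination (-γ) * hpow

end InternalEnergy

noncomputable def energyDensity {d : ℕ} (c γ : ℝ) (ρ θ : ℝ × (Fin d → ℝ) → ℝ)
    (u : ℝ × (Fin d → ℝ) → Fin d → ℝ) (y : ℝ × (Fin d → ℝ)) : ℝ :=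
  1 / 2 * ρ y * ∑ i, u y i ^ 2 + c * PiH γ (ρ y * θ y)

noncomputable def energyFlux {d : ℕ} (c γ η : ℝ) (ρ θ : ℝ × (Fin d → ℝ) → ℝ)
    (u : ℝ × (Fin d → ℝ) → Fin d → ℝ) (y : ℝ × (Fin d → ℝ)) (j : Fin d) : ℝ :=
  1 / 2 * ρ y * (∑ i, u y i ^ 2) * u y j
    + c * ((PiH γ (ρ y * θ y) + (ρ y * θ y) ^ γ - 1)
      * (u y j - η * pderivX j (fun y' => (ρ y' * θ y') ^ γ) y))

section Balance

variable {d : ℕ} {z : ℝ × (Fin d → ℝ)} {γ : ℝ} {ρ θ q : ℝ × (Fin d → ℝ) → ℝ}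
  {u w : ℝ × (Fin d → ℝ) → Fin d → ℝ}

lemma fderiv_sum_sq_apply (hu : ∀ i, DifferentiableAt ℝ (fun y => u y i) z)
    (v : ℝ × (Fin d → ℝ)) :
    fderiv ℝ (fun y => ∑ i, u y i ^ 2) z v = ∑ i, 2 * u z i * fderiv ℝ (fun y => u y i) z v := by
  rw [fderiv_fun_sum fun i _ => (hu i).fun_pow 2]
  simp [fderiv_fun_pow 2 (hu _)]

lemma kinetic_energy_balance (f : Fin d → ℝ) (hρ : DifferentiableAt ℝ ρ z)
    (hu : ∀ i, DifferentiableAt ℝ (fun y => u y i) z)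
    (hmass : pderivT ρ z + diverg (fun y i => ρ y * u y i) z = 0)
    (hmom : ∀ i, pderivT (fun y => ρ y * u y i) z
      + diverg (fun y j => ρ y * u y i * u y j) z + f i = 0) :
    pderivT (fun y => 1 / 2 * ρ y * ∑ i, u y i ^ 2) z
      + diverg (fun y j => 1 / 2 * ρ y * (∑ i, u y i ^ 2) * u y j) z
      = -∑ i, u z i * f i := by
  rw [pderivT_add_diverg_mul hρ hu] at hmass
  have hacc : ∀ i, ρ z * fderiv ℝ (fun y => u y i) z (1, u z) = -f i := by
    intro i
    have h := hmom i
    rw [pderivT_add_diverg_mul (hρ.fun_mul (hu i)) hu, fderiv_fun_mul hρ (hu i)] at h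
    simp only [add_apply, smul_apply, smul_eq_mul] at h
    linear_combination h - u z i * hmass
  have hsum : DifferentiableAt ℝ (fun y => ∑ i, u y i ^ 2) z :=
    DifferentiableAt.fun_sum fun i _ => (hu i).fun_pow 2
  rw [pderivT_add_diverg_mul ((hρ.const_mul _).fun_mul hsum) hu,
    fderiv_fun_mul (hρ.const_mul _) hsum, fderiv_const_mul hρ]
  simp only [add_apply, smul_apply, smul_eq_mul, fderiv_sum_sq_apply hu]
  have hwork : 1 / 2 * ρ z * ∑ i, 2 * u z i * fderiv ℝ (fun y => u y i) z (1, u z)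
      = -∑ i, u z i * f i := by
    rw [Finset.mul_sum, ← Finset.sum_neg_distrib]
    refine Finset.sum_congr rfl fun i _ => ?_
    linear_combination u z i * hacc i
  linear_combination hwork + 1 / 2 * (∑ i, u z i ^ 2) * hmass

lemma internal_energy_balance (hγ : γ ≠ 1) (hq : DifferentiableAt ℝ q z) (hqpos : 0 < q z)
    (hw : ∀ i, DifferentiableAt ℝ (fun y => w y i) z)
    (htr : pderivT q z + diverg (fun y i => q y * w y i) z = 0) :
    pderivT (fun y => PiH γ (q y)) z
      + diverg (fun y j => (PiH γ (q y) + q y ^ γ - 1) * w y j) z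
      = ∑ j, w z j * pderivX j (fun y => q y ^ γ) z := by
  set dPi := psiH' γ (q z) - psiH' γ 1
  have hPi : HasFDerivAt (fun y => PiH γ (q y)) (dPi • fderiv ℝ q z) z :=
    (hasDerivAt_PiH hqpos).comp_hasFDerivAt z hq.hasFDerivAt
  have hp : DifferentiableAt ℝ (fun y => q y ^ γ) z := hq.rpow_const (Or.inl hqpos.ne')
  have hG := (hPi.fun_add hp.hasFDerivAt).sub_const 1
  rw [pderivT_add_diverg_mul hq hw] at htr
  have hsplit : fderiv ℝ q z (1, w z) = fderiv ℝ q z (1, 0) + fderiv ℝ q z (0, w z) := by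
    rw [← map_add]; simp
  rw [diverg_mul hG.differentiableAt hw, hG.fderiv, pderivT, hPi.fderiv, ← fderiv_apply_zero_prod]
  simp only [add_apply, smul_apply, smul_eq_mul]
  linear_combination dPi * htr - dPi * hsplit + diverg w z * PiH_sub_mul_deriv hγ hqpos

lemma energy_balance (c η : ℝ) (hγ : γ ≠ 1) (hρ : DifferentiableAt ℝ ρ z)
    (hθ : DifferentiableAt ℝ θ z) (hu : ∀ i, DifferentiableAt ℝ (fun y => u y i) z)
    (hpx : ∀ j, DifferentiableAt ℝ (pderivX j (fun y => (ρ y * θ y) ^ γ)) z)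
    (hpos : 0 < ρ z * θ z)
    (hmass : pderivT ρ z + diverg (fun y i => ρ y * u y i) z = 0)
    (hmom : ∀ i, pderivT (fun y => ρ y * u y i) z + diverg (fun y j => ρ y * u y i * u y j) z
      + c * pderivX i (fun y => (ρ y * θ y) ^ γ) z = 0)
    (htemp : pderivT (fun y => ρ y * θ y) z
      + diverg (fun y i => ρ y * θ y
          * (u y i - η * pderivX i (fun y' => (ρ y' * θ y') ^ γ) y)) z = 0) :
    pderivT (energyDensity c γ ρ θ u) z + diverg (energyFlux c γ η ρ θ u) z
      = -(c * η * ∑ j, pderivX j (fun y => (ρ y * θ y) ^ γ) z ^ 2) := by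
  set P := fun j => pderivX j (fun y => (ρ y * θ y) ^ γ) z
  have hq : DifferentiableAt ℝ (fun y => ρ y * θ y) z := hρ.fun_mul hθ
  have hw : ∀ j, DifferentiableAt ℝ
      (fun y => u y j - η * pderivX j (fun y' => (ρ y' * θ y') ^ γ) y) z :=
    fun j => (hu j).fun_sub ((hpx j).const_mul η)
  have hK : DifferentiableAt ℝ (fun y => 1 / 2 * ρ y * ∑ i, u y i ^ 2) z :=
    (hρ.const_mul _).fun_mul (DifferentiableAt.fun_sum fun i _ => (hu i).fun_pow 2)
  have hPi : DifferentiableAt ℝ (fun y => PiH γ (ρ y * θ y)) z :=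
    ((hasDerivAt_PiH hpos).differentiableAt.comp z hq :)
  have hG : DifferentiableAt ℝ (fun y => PiH γ (ρ y * θ y) + (ρ y * θ y) ^ γ - 1) z :=
    (hPi.fun_add (hq.rpow_const (Or.inl hpos.ne'))).sub_const 1
  have hdens : pderivT (energyDensity c γ ρ θ u) z
      = pderivT (fun y => 1 / 2 * ρ y * ∑ i, u y i ^ 2) z
        + c * pderivT (fun y => PiH γ (ρ y * θ y)) z := by
    unfold energyDensity
    simp only [pderivT, fderiv_fun_add hK (hPi.const_mul c), fderiv_const_mul hPi, add_apply,
      smul_apply, smul_eq_mul]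
  have hflux := diverg_add (fun j => hK.fun_mul (hu j))
    (fun j => (hG.fun_mul (hw j)).const_mul c)
  rw [diverg_const_mul (fun j => hG.fun_mul (hw j))] at hflux
  have hsums : -∑ i, u z i * (c * P i) + c * ∑ j, (u z j - η * P j) * P j
      = -(c * η * ∑ j, P j ^ 2) := by
    simp only [Finset.mul_sum, ← Finset.sum_neg_distrib, ← Finset.sum_add_distrib]
    exact Finset.sum_congr rfl fun j _ => by ring
  unfold energyFlux
  rw [hdens, hflux]
  linear_combination kinetic_energy_balance (fun i => c * P i) hρ hu hmass hmom
    + c * internal_energy_balance hγ hq hpos hw htemp + hsums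

end Balance

section Regularity

variable {d : ℕ} {U : Set (ℝ × (Fin d → ℝ))} {γ : ℝ} {n m : WithTop ℕ∞}
  {ρ θ : ℝ × (Fin d → ℝ) → ℝ} {u : ℝ × (Fin d → ℝ) → Fin d → ℝ}

lemma ContDiffOn.continuousOn_fderiv_apply_of_isOpen {E F : Type*} [NormedAddCommGroup E]
    [NormedSpace ℝ E] [NormedAddCommGroup F] [NormedSpace ℝ F] {V : Set E} {f : E → F}
    (hf : ContDiffOn ℝ 1 f V) (hV : IsOpen V) (v : E) :
    ContinuousOn (fun z => fderiv ℝ f z v) V :=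
  (hf.continuousOn_fderiv_of_isOpen hV le_rfl).clm_apply continuousOn_const

lemma ContDiffOn.pderivX {f : ℝ × (Fin d → ℝ) → ℝ} (hf : ContDiffOn ℝ n f U)
    (hU : IsOpen U) (hmn : m + 1 ≤ n) (j : Fin d) : ContDiffOn ℝ m (pderivX j f) U :=
  (ContinuousLinearMap.apply ℝ ℝ ((0, Pi.single j 1) : ℝ × (Fin d → ℝ))).contDiff.comp_contDiffOn
    (hf.fderiv_of_isOpen hU hmn)

lemma ContDiffOn.PiH_comp {q : ℝ × (Fin d → ℝ) → ℝ} (hq : ContDiffOn ℝ n q U)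
    (hp : ContDiffOn ℝ n (fun y => q y ^ γ) U) : ContDiffOn ℝ n (fun y => PiH γ (q y)) U :=
  ((hp.div_const _).sub contDiffOn_const).sub (contDiffOn_const.mul (hq.sub contDiffOn_const))


lemma contDiffOn_energyDensity (c : ℝ) (hρ : ContDiffOn ℝ n ρ U) (hθ : ContDiffOn ℝ n θ U)
    (hu : ContDiffOn ℝ n u U) (hp : ContDiffOn ℝ n (fun y => (ρ y * θ y) ^ γ) U) :
    ContDiffOn ℝ n (energyDensity c γ ρ θ u) U :=
  ((contDiffOn_const.mul hρ).mul (ContDiffOn.sum fun i _ => (contDiffOn_pi.1 hu i).pow 2)).add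
    (contDiffOn_const.mul ((hρ.mul hθ).PiH_comp hp))

lemma contDiffOn_energyFlux (c η : ℝ) (hU : IsOpen U) (hρ : ContDiffOn ℝ n ρ U)
    (hθ : ContDiffOn ℝ n θ U) (hu : ContDiffOn ℝ n u U)
    (hp : ContDiffOn ℝ m (fun y => (ρ y * θ y) ^ γ) U) (hmn : n + 1 ≤ m) (j : Fin d) :
    ContDiffOn ℝ n (fun y => energyFlux c γ η ρ θ u y j) U := by
  have hp' := hp.of_le (le_self_add.trans hmn)
  have hu' := contDiffOn_pi.1 hu
  exact ((contDiffOn_const.mul hρ).mul (ContDiffOn.sum fun i _ => (hu' i).pow 2)).mul (hu' j)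
    |>.add <| contDiffOn_const.mul <|
      ((((hρ.mul hθ).PiH_comp hp').add hp').sub contDiffOn_const).mul
        ((hu' j).sub (contDiffOn_const.mul (hp.pderivX hU hmn j)))

end Regularity

section Periodicity

variable {d : ℕ} {v : ℝ × (Fin d → ℝ)}

lemma Function.Periodic.pderivX {f : ℝ × (Fin d → ℝ) → ℝ} (hf : Function.Periodic f v)
    (j : Fin d) : Function.Periodic (pderivX j f) v := fun y => by
  rw [_root_.pderivX, _root_.pderivX, ← fderiv_comp_add_right, funext hf]

lemma Function.Periodic.energyFlux {ρ θ : ℝ × (Fin d → ℝ) → ℝ} {u : ℝ × (Fin d → ℝ) → Fin d → ℝ}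
    (hρ : Function.Periodic ρ v) (hθ : Function.Periodic θ v) (hu : Function.Periodic u v)
    (c γ η : ℝ) : Function.Periodic (energyFlux c γ η ρ θ u) v := fun y => by
  have hp : Function.Periodic (fun y => (ρ y * θ y) ^ γ) v := fun y => by simp only [hρ y, hθ y]
  ext j
  simp only [_root_.energyFlux, hρ y, hθ y, hu y, hp.pderivX j y]

lemma periodic_zero_single {α : Type*} {f : ℝ × (Fin d → ℝ) → α}
    (hf : ∀ (t : ℝ) (x : Fin d → ℝ) (k : Fin d → ℤ), f (t, x + fun i => (k i : ℝ)) = f (t, x))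
    (i : Fin d) : Function.Periodic f (0, Pi.single i 1) := fun ⟨t, x⟩ => by
  have hk : (fun j => ((Pi.single i 1 : Fin d → ℤ) j : ℝ)) = Pi.single i 1 := by
    ext j; by_cases h : j = i <;> simp [h]
  simpa [hk] using hf t x (Pi.single i 1)

end Periodicity

lemma Fin.insertNth_eq_insertNth_zero_add_single {n : ℕ} {α : Type*} [AddZeroClass α]
    (i : Fin (n + 1)) (a : α) (x : Fin n → α) :
    (i.insertNth a x : Fin (n + 1) → α) = i.insertNth (0 : α) x + Pi.single i a := by
  ext j
  cases j using Fin.succAboveCases i with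
  | x => simp
  | p k => simp [Fin.succAbove_ne]

section Integration

variable {d : ℕ}

lemma integral_divergence_eq_zero_of_periodic (V : (Fin d → ℝ) → Fin d → ℝ)
    (V' : (Fin d → ℝ) → (Fin d → ℝ) →L[ℝ] (Fin d → ℝ)) (hV : ∀ x, HasFDerivAt V (V' x) x)
    (hdiv : ContinuousOn (fun x => ∑ i, V' x (Pi.single i 1) i) (Icc 0 1))
    (hper : ∀ i, Function.Periodic V (Pi.single i 1)) :
    ∫ x in Icc 0 1, ∑ i, V' x (Pi.single i 1) i = 0 := by
  cases d with
  | zero => simp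
  | succ n =>
    have hcont : Continuous V := continuous_iff_continuousAt.2 fun x => (hV x).continuousAt
    rw [integral_divergence_of_hasFDerivAt_off_countable 0 1 zero_le_one V V' ∅ countable_empty
      hcont.continuousOn (fun x _ => hV x) (hdiv.integrableOn_compact isCompact_Icc)]
    refine Finset.sum_eq_zero fun i _ => sub_eq_zero.2 ?_
    refine setIntegral_congr_fun measurableSet_Icc fun x _ => ?_
    rw [Pi.one_apply, Pi.zero_apply, Fin.insertNth_eq_insertNth_zero_add_single, hper i]

lemma integral_diverg_slice_eq_zero {W : ℝ × (Fin d → ℝ) → Fin d → ℝ} {s : ℝ}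
    (hW : ∀ x j, DifferentiableAt ℝ (fun y => W y j) (s, x))
    (hdiv : ContinuousOn (fun x => diverg W (s, x)) (Icc 0 1))
    (hper : ∀ i, Function.Periodic W (0, Pi.single i 1)) :
    ∫ x in Icc (0 : Fin d → ℝ) 1, diverg W (s, x) = 0 :=
  integral_divergence_eq_zero_of_periodic (fun x => W (s, x))
    (fun x => .pi fun j => (fderiv ℝ (fun y => W y j) (s, x)).comp (.inr ℝ ℝ _))
    (fun x => hasFDerivAt_pi.2 fun j => (hW x j).hasFDerivAt.comp x (hasFDerivAt_prodMk_right s x))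
    hdiv (fun i x => by simpa using hper i (s, x))

lemma integral_sub_integral_eq_intervalIntegral_pderivT {K : Set (Fin d → ℝ)} (hK : IsCompact K)
    {U : Set (ℝ × (Fin d → ℝ))} (hU : IsOpen U) {e : ℝ × (Fin d → ℝ) → ℝ}
    (he : ContDiffOn ℝ 1 e U) {t₁ t₂ : ℝ} (h12 : t₁ ≤ t₂) (hsub : Icc t₁ t₂ ×ˢ K ⊆ U) :
    (∫ x in K, e (t₂, x)) - ∫ x in K, e (t₁, x) = ∫ s in t₁..t₂, ∫ x in K, pderivT e (s, x) := by
  have hcont : ContinuousOn (pderivT e) (Icc t₁ t₂ ×ˢ K) :=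
    (he.continuousOn_fderiv_apply_of_isOpen hU (1, 0)).mono hsub
  have hslice : ∀ t ∈ Icc t₁ t₂, IntegrableOn (fun x => e (t, x)) K := fun t ht =>
    (he.continuousOn.comp (Continuous.prodMk_right t).continuousOn
      fun x hx => hsub ⟨ht, hx⟩).integrableOn_compact hK
  have hint : Integrable (Function.uncurry fun s x => pderivT e (s, x))
      ((volume.restrict (uIoc t₁ t₂)).prod (volume.restrict K)) := by
    rw [uIoc_of_le h12, Measure.prod_restrict, ← Measure.volume_eq_prod]
    exact (hcont.integrableOn_compact (isCompact_Icc.prod hK)).mono_set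
      (prod_mono Ioc_subset_Icc_self subset_rfl)
  rw [← integral_sub (hslice t₂ (right_mem_Icc.2 h12)) (hslice t₁ (left_mem_Icc.2 h12)),
    intervalIntegral_integral_swap hint]
  refine setIntegral_congr_fun hK.measurableSet fun x hx => ?_
  have hderiv : ∀ s ∈ uIcc t₁ t₂, HasDerivAt (fun s => e (s, x)) (pderivT e (s, x)) s := by
    intro s hs
    rw [uIcc_of_le h12] at hs
    have hd : DifferentiableAt ℝ e (s, x) :=
      (he.differentiableOn one_ne_zero).differentiableAt (hU.mem_nhds (hsub ⟨hs, hx⟩))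
    exact hd.hasFDerivAt.comp_hasDerivAt s ((hasDerivAt_id s).prodMk (hasDerivAt_const s x))
  have hcont' : ContinuousOn (fun s => pderivT e (s, x)) (uIcc t₁ t₂) := by
    rw [uIcc_of_le h12]
    exact hcont.comp (Continuous.prodMk_left x).continuousOn fun s hs => ⟨hs, hx⟩
  exact (intervalIntegral.integral_eq_sub_of_hasDerivAt hderiv hcont'.intervalIntegrable).symm

theorem antitoneOn_integral_of_pderivT_add_diverg_nonpos {a b : ℝ}
    {e : ℝ × (Fin d → ℝ) → ℝ} {W : ℝ × (Fin d → ℝ) → Fin d → ℝ}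
    (he : ContDiffOn ℝ 1 e (Ioo a b ×ˢ univ))
    (hW : ∀ j, ContDiffOn ℝ 1 (fun y => W y j) (Ioo a b ×ˢ univ))
    (hper : ∀ i, Function.Periodic W (0, Pi.single i 1))
    (hdiss : ∀ z ∈ Ioo a b ×ˢ univ, pderivT e z + diverg W z ≤ 0) :
    AntitoneOn (fun t => ∫ x in Icc (0 : Fin d → ℝ) 1, e (t, x)) (Ioo a b) := by
  have hU : IsOpen (Ioo a b ×ˢ (univ : Set (Fin d → ℝ))) := isOpen_Ioo.prod isOpen_univ
  have hmem : ∀ s ∈ Ioo a b, ∀ x : Fin d → ℝ, (s, x) ∈ Ioo a b ×ˢ univ :=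
    fun s hs x => ⟨hs, mem_univ x⟩
  have hdiv : ContinuousOn (diverg W) (Ioo a b ×ˢ univ) :=
    continuousOn_finsetSum _ fun j _ => (hW j).continuousOn_fderiv_apply_of_isOpen hU _
  have hdt : ContinuousOn (pderivT e) (Ioo a b ×ˢ univ) :=
    he.continuousOn_fderiv_apply_of_isOpen hU (1, 0)
  intro t₁ h₁ t₂ h₂ h12
  have hsub : Icc t₁ t₂ ×ˢ Icc (0 : Fin d → ℝ) 1 ⊆ Ioo a b ×ˢ univ := fun z hz =>
    ⟨⟨h₁.1.trans_le hz.1.1, hz.1.2.trans_lt h₂.2⟩, mem_univ _⟩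
  rw [← sub_nonpos, integral_sub_integral_eq_intervalIntegral_pderivT isCompact_Icc hU he h12 hsub,
    intervalIntegral.integral_of_le h12]
  refine setIntegral_nonpos measurableSet_Ioc fun s hs => ?_
  have hs' : s ∈ Ioo a b := ⟨h₁.1.trans hs.1, hs.2.trans_lt h₂.2⟩
  have hslice : ∀ f : ℝ × (Fin d → ℝ) → ℝ, ContinuousOn f (Ioo a b ×ˢ univ) →
      Continuous (fun x => f (s, x)) := fun f hf =>
    hf.comp_continuous (Continuous.prodMk_right s) (hmem s hs')
  have hWs : ∀ x j, DifferentiableAt ℝ (fun y => W y j) (s, x) := fun x j =>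
    ((hW j).differentiableOn one_ne_zero).differentiableAt (hU.mem_nhds (hmem s hs' x))
  calc ∫ x in Icc 0 1, pderivT e (s, x)
      = ∫ x in Icc 0 1, (pderivT e (s, x) + diverg W (s, x)) := by
        rw [integral_add (hslice _ hdt).integrableOn_Icc (hslice _ hdiv).integrableOn_Icc,
          integral_diverg_slice_eq_zero hWs (hslice _ hdiv).continuousOn hper, add_zero]
    _ ≤ 0 := setIntegral_nonpos measurableSet_Icc fun x _ => hdiss _ (hmem s hs' x)

end Integration

theorem total_energy_nonincreasing_periodic_general
    (d : ℕ) (T ε γ η : ℝ) (hγ : 1 < γ) (hη : 0 ≤ η)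
    (ρ θ : ℝ × (Fin d → ℝ) → ℝ) (u : ℝ × (Fin d → ℝ) → Fin d → ℝ)
    (hρ : ContDiffOn ℝ 1 ρ (Ioo (0:ℝ) T ×ˢ (univ : Set (Fin d → ℝ))))
    (hθ : ContDiffOn ℝ 1 θ (Ioo (0:ℝ) T ×ˢ (univ : Set (Fin d → ℝ))))
    (hu : ContDiffOn ℝ 1 u (Ioo (0:ℝ) T ×ˢ (univ : Set (Fin d → ℝ))))
    (hp : ContDiffOn ℝ 2 (fun y => (ρ y * θ y) ^ γ) (Ioo (0:ℝ) T ×ˢ (univ : Set (Fin d → ℝ))))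
    (hρper : ∀ (t : ℝ) (x : Fin d → ℝ) (k : Fin d → ℤ),
      ρ (t, x + fun i => (k i : ℝ)) = ρ (t, x))
    (hθper : ∀ (t : ℝ) (x : Fin d → ℝ) (k : Fin d → ℤ),
      θ (t, x + fun i => (k i : ℝ)) = θ (t, x))
    (huper : ∀ (t : ℝ) (x : Fin d → ℝ) (k : Fin d → ℤ),
      u (t, x + fun i => (k i : ℝ)) = u (t, x))
    (hρpos : ∀ z ∈ Ioo (0:ℝ) T ×ˢ (univ : Set (Fin d → ℝ)), 0 < ρ z)
    (hθpos : ∀ z ∈ Ioo (0:ℝ) T ×ˢ (univ : Set (Fin d → ℝ)), 0 < θ z)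
    (hmass : ∀ z ∈ Ioo (0:ℝ) T ×ˢ (univ : Set (Fin d → ℝ)),
      pderivT ρ z + diverg (fun y i => ρ y * u y i) z = 0)
    (hmom : ∀ z ∈ Ioo (0:ℝ) T ×ˢ (univ : Set (Fin d → ℝ)), ∀ i : Fin d,
      pderivT (fun y => ρ y * u y i) z + diverg (fun y j => ρ y * u y i * u y j) z
        + (ε ^ 2)⁻¹ * pderivX i (fun y => (ρ y * θ y) ^ γ) z = 0)
    (htemp : ∀ z ∈ Ioo (0:ℝ) T ×ˢ (univ : Set (Fin d → ℝ)),
      pderivT (fun y => ρ y * θ y) z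
        + diverg (fun y i => ρ y * θ y
            * (u y i - η * pderivX i (fun y' => (ρ y' * θ y') ^ γ) y)) z = 0) :
    ∀ t₁ ∈ Ioo (0:ℝ) T, ∀ t₂ ∈ Ioo (0:ℝ) T, t₁ ≤ t₂ →
      (∫ x in Icc (0 : Fin d → ℝ) 1,
        ((1 / 2) * ρ (t₂, x) * ∑ i, (u (t₂, x) i) ^ 2
          + (ε ^ 2)⁻¹ * PiH γ (ρ (t₂, x) * θ (t₂, x))))
      ≤ ∫ x in Icc (0 : Fin d → ℝ) 1,
        ((1 / 2) * ρ (t₁, x) * ∑ i, (u (t₁, x) i) ^ 2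
          + (ε ^ 2)⁻¹ * PiH γ (ρ (t₁, x) * θ (t₁, x))) := by
  have hU : IsOpen (Ioo (0:ℝ) T ×ˢ (univ : Set (Fin d → ℝ))) := isOpen_Ioo.prod isOpen_univ
  have hdiss : ∀ z ∈ Ioo (0:ℝ) T ×ˢ (univ : Set (Fin d → ℝ)),
      pderivT (energyDensity (ε ^ 2)⁻¹ γ ρ θ u) z
        + diverg (energyFlux (ε ^ 2)⁻¹ γ η ρ θ u) z ≤ 0 := by
    intro z hz
    have hdiff : ∀ {f : ℝ × (Fin d → ℝ) → ℝ}, ContDiffOn ℝ 1 f (Ioo 0 T ×ˢ univ) →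
        DifferentiableAt ℝ f z := fun hf =>
      (hf.contDiffAt (hU.mem_nhds hz)).differentiableAt one_ne_zero
    rw [energy_balance _ η hγ.ne' (hdiff hρ) (hdiff hθ) (fun i => hdiff (contDiffOn_pi.1 hu i))
      (fun j => hdiff (hp.pderivX hU le_rfl j)) (mul_pos (hρpos z hz) (hθpos z hz)) (hmass z hz)
      (hmom z hz) (htemp z hz), neg_nonpos]
    have hsq : 0 ≤ ∑ j, pderivX j (fun y => (ρ y * θ y) ^ γ) z ^ 2 :=
      Finset.sum_nonneg fun j _ => sq_nonneg _
    positivity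
  exact antitoneOn_integral_of_pderivT_add_diverg_nonpos
    (contDiffOn_energyDensity _ hρ hθ hu (hp.of_le one_le_two))
    (contDiffOn_energyFlux _ η hU hρ hθ hu hp le_rfl)
    (fun i => (periodic_zero_single hρper i).energyFlux (periodic_zero_single hθper i)
      (periodic_zero_single huper i) _ γ η)
    hdiss

theorem total_energy_nonincreasing_periodic
    (d : ℕ) (hd : 1 ≤ d) (T ε γ η : ℝ) (hT : 0 < T) (hε : 0 < ε) (hγ : 1 < γ) (hη : 0 ≤ η)
    (ρ θ : ℝ × (Fin d → ℝ) → ℝ) (u : ℝ × (Fin d → ℝ) → Fin d → ℝ)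
    (hρ : ContDiffOn ℝ 1 ρ (Ioo (0:ℝ) T ×ˢ (univ : Set (Fin d → ℝ))))
    (hθ : ContDiffOn ℝ 1 θ (Ioo (0:ℝ) T ×ˢ (univ : Set (Fin d → ℝ))))
    (hu : ContDiffOn ℝ 1 u (Ioo (0:ℝ) T ×ˢ (univ : Set (Fin d → ℝ))))
    (hp : ContDiffOn ℝ 2 (fun y => (ρ y * θ y) ^ γ) (Ioo (0:ℝ) T ×ˢ (univ : Set (Fin d → ℝ))))
    (hρper : ∀ (t : ℝ) (x : Fin d → ℝ) (k : Fin d → ℤ),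
      ρ (t, x + fun i => (k i : ℝ)) = ρ (t, x))
    (hθper : ∀ (t : ℝ) (x : Fin d → ℝ) (k : Fin d → ℤ),
      θ (t, x + fun i => (k i : ℝ)) = θ (t, x))
    (huper : ∀ (t : ℝ) (x : Fin d → ℝ) (k : Fin d → ℤ),
      u (t, x + fun i => (k i : ℝ)) = u (t, x))
    (hρpos : ∀ z ∈ Ioo (0:ℝ) T ×ˢ (univ : Set (Fin d → ℝ)), 0 < ρ z)
    (hθpos : ∀ z ∈ Ioo (0:ℝ) T ×ˢ (univ : Set (Fin d → ℝ)), 0 < θ z)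
    (hmass : ∀ z ∈ Ioo (0:ℝ) T ×ˢ (univ : Set (Fin d → ℝ)),
      pderivT ρ z + diverg (fun y i => ρ y * u y i) z = 0)
    (hmom : ∀ z ∈ Ioo (0:ℝ) T ×ˢ (univ : Set (Fin d → ℝ)), ∀ i : Fin d,
      pderivT (fun y => ρ y * u y i) z + diverg (fun y j => ρ y * u y i * u y j) z
        + (ε ^ 2)⁻¹ * pderivX i (fun y => (ρ y * θ y) ^ γ) z = 0)
    (htemp : ∀ z ∈ Ioo (0:ℝ) T ×ˢ (univ : Set (Fin d → ℝ)),
      pderivT (fun y => ρ y * θ y) z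
        + diverg (fun y i => ρ y * θ y
            * (u y i - η * pderivX i (fun y' => (ρ y' * θ y') ^ γ) y)) z = 0) :
    ∀ t₁ ∈ Ioo (0:ℝ) T, ∀ t₂ ∈ Ioo (0:ℝ) T, t₁ ≤ t₂ →
      (∫ x in Icc (0 : Fin d → ℝ) 1,
        ((1 / 2) * ρ (t₂, x) * ∑ i, (u (t₂, x) i) ^ 2
          + (ε ^ 2)⁻¹ * PiH γ (ρ (t₂, x) * θ (t₂, x))))
      ≤ ∫ x in Icc (0 : Fin d → ℝ) 1,
        ((1 / 2) * ρ (t₁, x) * ∑ i, (u (t₁, x) i) ^ 2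
          + (ε ^ 2)⁻¹ * PiH γ (ρ (t₁, x) * θ (t₁, x))) :=
  total_energy_nonincreasing_periodic_general d T ε γ η hγ hη ρ θ u hρ hθ hu hp hρper hθper huper
    hρpos hθpos hmass hmom htemp
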